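/- arXiv:2407.11554 — 4 statements merged into one kernel-verified Lean document; each statement's English description precedes it below -/
import Mathlib

section
/- Suppose every prime factor of L is at least 2w − 1. Then every conflict-avoiding code of length L and weight w has at most ⌊(L − 1)/(2w − 2)⌋ codewords. -/
open Pointwise

/-- The set of nonzero differences of `S`. -/
def dstar {L : ℕ} (S : Set (ZMod L)) : Set (ZMod L) := (S - S) \ {0}

/-- A conflict-avoiding code of length `L` and weight `w`: a collection of
`w`-subsets of `ZMod L` with pairwise disjoint nonzero difference sets. -/
def IsCAC (L w : ℕ) (C : Set (Set (ZMod L))) : Prop :=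
  (∀ S ∈ C, S.ncard = w) ∧
  ∀ S ∈ C, ∀ T ∈ C, S ≠ T → Disjoint (dstar S) (dstar T)

/-- A set is equi-difference of weight `w` if it equals `{0, g, 2g, ..., (w-1)g}`
for some generator `g`. -/
def IsEquiDiff (L w : ℕ) (S : Set (ZMod L)) : Prop :=
  ∃ g : ZMod L, S = {x | ∃ k : ℕ, k < w ∧ x = (k : ZMod L) * g}

/-- An equi-difference conflict-avoiding code. -/
def IsECAC (L w : ℕ) (C : Set (Set (ZMod L))) : Prop :=
  IsCAC L w C ∧ ∀ S ∈ C, IsEquiDiff L w S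

theorem stmt11 (L w : ℕ) (hL : 0 < L) (hw : 2 ≤ w)
    (hfac : ∀ q : ℕ, q.Prime → q ∣ L → 2 * w - 1 ≤ q) :
    ∀ C : Set (Set (ZMod L)), IsCAC L w C → C.ncard ≤ (L - 1) / (2 * w - 2) := by
  classical
  intro C hC
  haveI : NeZero L := ⟨hL.ne'⟩
  -- L = 1 case: no set can have ncard w ≥ 2
  rcases eq_or_ne L 1 with hL1 | hL1
  · subst hL1
    have hempty : C = ∅ := by
      by_contra h
      obtain ⟨S, hS⟩ := Set.nonempty_iff_ne_empty.mpr h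
      have hcard := hC.1 S hS
      have : S.ncard ≤ 1 := by
        have h1 := Set.ncard_le_ncard (Set.subset_univ S) (Set.toFinite _)
        rwa [Set.ncard_univ, Nat.card_eq_fintype_card, ZMod.card] at h1
      omega
    simp [hempty]
  -- minimal order bound
  have hmin : ((2 * w - 1 : ℕ) : ℕ∞) ≤ AddMonoid.minOrder (ZMod L) := by
    rw [ZMod.minOrder (NeZero.ne L) hL1]
    exact_mod_cast hfac L.minFac (Nat.minFac_prime hL1) (Nat.minFac_dvd L)
  -- key finset lemma
  have key : ∀ s : Finset (ZMod L), s.card = w → 2 * w - 2 ≤ ((s - s).erase 0).card := by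
    intro s hs
    have hne : s.Nonempty := Finset.card_pos.mp (by omega)
    have hne' : (-s).Nonempty := hne.neg
    have h := cauchy_davenport_minOrder_add hne hne'
    have hadd : s + (-s) = s - s := by
      ext x; simp [Finset.mem_sub, Finset.mem_add, Finset.mem_neg, sub_eq_add_neg]
    rw [hadd, Finset.card_neg, hs] at h
    have h2 : ((2 * w - 1 : ℕ) : ℕ∞) ≤ ((s - s).card : ℕ∞) := by
      refine le_trans ?_ h
      exact le_min hmin (Nat.cast_le.mpr (by omega))
    have h3 : 2 * w - 1 ≤ (s - s).card := by exact_mod_cast h2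
    have h4 : (s - s).card - 1 ≤ ((s - s).erase 0).card := Finset.pred_card_le_card_erase
    omega
  -- counting
  have hCfin : C.Finite := Set.toFinite C
  set Cf : Finset (Set (ZMod L)) := hCfin.toFinset with hCf
  set f : Set (ZMod L) → Finset (ZMod L) :=
    fun S => ((S.toFinite.toFinset) - S.toFinite.toFinset).erase 0 with hf
  have hcoe : ∀ S : Set (ZMod L), (↑(f S) : Set (ZMod L)) = dstar S := by
    intro S
    simp only [hf, Finset.coe_erase, Finset.coe_sub, Set.Finite.coe_toFinset]
    rfl
  have hcard : ∀ S ∈ Cf, 2 * w - 2 ≤ (f S).card := by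
    intro S hS
    have hSC : S ∈ C := hCfin.mem_toFinset.mp hS
    apply key
    rw [← Set.ncard_eq_toFinset_card S S.toFinite]
    exact hC.1 S hSC
  have hdisj : ∀ S ∈ Cf, ∀ T ∈ Cf, S ≠ T → Disjoint (f S) (f T) := by
    intro S hS T hT hST
    rw [← Finset.disjoint_coe, hcoe, hcoe]
    exact hC.2 S (hCfin.mem_toFinset.mp hS) T (hCfin.mem_toFinset.mp hT) hST
  have hsub : Cf.biUnion f ⊆ Finset.univ.erase 0 := by
    intro x hx
    rw [Finset.mem_biUnion] at hx
    obtain ⟨S, _, hxS⟩ := hx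
    exact Finset.mem_erase.mpr ⟨(Finset.mem_erase.mp hxS).1, Finset.mem_univ x⟩
  have hbiU : (Cf.biUnion f).card = ∑ S ∈ Cf, (f S).card := Finset.card_biUnion hdisj
  have hLm1 : (Finset.univ.erase (0 : ZMod L)).card = L - 1 := by
    rw [Finset.card_erase_of_mem (Finset.mem_univ 0), Finset.card_univ, ZMod.card]
  have hsum : Cf.card * (2 * w - 2) ≤ ∑ S ∈ Cf, (f S).card := by
    calc Cf.card * (2 * w - 2) = ∑ _S ∈ Cf, (2 * w - 2) := by
          rw [Finset.sum_const, smul_eq_mul]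
      _ ≤ ∑ S ∈ Cf, (f S).card := Finset.sum_le_sum hcard
  have hfinal : Cf.card * (2 * w - 2) ≤ L - 1 := by
    calc Cf.card * (2 * w - 2) ≤ ∑ S ∈ Cf, (f S).card := hsum
      _ = (Cf.biUnion f).card := hbiU.symm
      _ ≤ (Finset.univ.erase (0 : ZMod L)).card := Finset.card_le_card hsub
      _ = L - 1 := hLm1
  have hCcard : C.ncard = Cf.card := Set.ncard_eq_toFinset_card C hCfin
  rw [hCcard, Nat.le_div_iff_mul_le (by omega : 0 < 2 * w - 2)]
  exact hfinal
end

section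
/- Let p be a prime such that 2w − 2 divides p − 1. If there exists an equi-difference conflict-avoiding code of length p and weight w with (p−1)/(2w−2) codewords, then for every integer r ≥ 1 the maximum size of a conflict-avoiding code of length p^r and weight w equals (p^r − 1)/(2w − 2). -/
open Pointwise

section Aux

variable {L w : ℕ} {g : ZMod L}

private lemma equi_set_eq (w : ℕ) (g : ZMod L) :
    {x : ZMod L | ∃ k : ℕ, k < w ∧ x = (k : ZMod L) * g}
      = ↑((Finset.range w).image (fun k : ℕ => (k : ZMod L) * g)) := by
  ext x
  simp only [Set.mem_setOf_eq, Finset.coe_image, Set.mem_image, Finset.mem_coe,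
    Finset.mem_range]
  constructor
  · rintro ⟨k, hk, rfl⟩; exact ⟨k, hk, rfl⟩
  · rintro ⟨k, hk, rfl⟩; exact ⟨k, hk, rfl⟩

private lemma equi_injOn
    (hS : ({x : ZMod L | ∃ k : ℕ, k < w ∧ x = (k : ZMod L) * g}).ncard = w) :
    Set.InjOn (fun k : ℕ => (k : ZMod L) * g) ↑(Finset.range w) := by
  rw [equi_set_eq, Set.ncard_coe_finset] at hS
  exact Finset.injOn_of_card_image_eq (by rw [hS, Finset.card_range])

private lemma equi_inj
    (hS : ({x : ZMod L | ∃ k : ℕ, k < w ∧ x = (k : ZMod L) * g}).ncard = w) :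
    ∀ d : ℤ, d ≠ 0 → |d| ≤ (w : ℤ) - 1 → (d : ZMod L) * g ≠ 0 := by
  intro d hd hdw
  have hinj := equi_injOn hS
  set k := d.natAbs with hk
  have hk1 : 1 ≤ k := Int.natAbs_pos.mpr hd
  have hkw : k < w := by
    have h1 : (k : ℤ) < (w : ℤ) := by
      rw [Int.abs_eq_natAbs] at hdw; omega
    exact_mod_cast h1
  have hne : (k : ZMod L) * g ≠ 0 := by
    intro h0
    have hmem : (k : ℕ) ∈ (↑(Finset.range w) : Set ℕ) := by
      simp [Finset.mem_range]; omega
    have hmem0 : (0 : ℕ) ∈ (↑(Finset.range w) : Set ℕ) := by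
      simp [Finset.mem_range]; omega
    have := hinj hmem hmem0 (by simpa using h0)
    omega
  rcases Int.natAbs_eq d with h | h
  · rw [h, Int.cast_natCast]; exact hne
  · rw [h, Int.cast_neg, Int.cast_natCast, neg_mul]
    exact neg_ne_zero.mpr hne

end Aux

section Aux2

variable {L w : ℕ} {g : ZMod L}

private lemma equi_dstar (hw : 2 ≤ w)
    (hS : ({x : ZMod L | ∃ k : ℕ, k < w ∧ x = (k : ZMod L) * g}).ncard = w) :
    dstar {x : ZMod L | ∃ k : ℕ, k < w ∧ x = (k : ZMod L) * g}
      = {x : ZMod L | ∃ d : ℤ, d ≠ 0 ∧ |d| ≤ (w : ℤ) - 1 ∧ x = (d : ZMod L) * g} := by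
  ext x
  constructor
  · rintro ⟨hx1, hx2⟩
    rw [Set.mem_sub] at hx1
    obtain ⟨a, ⟨ka, hka, rfl⟩, b, ⟨kb, hkb, rfl⟩, rfl⟩ := hx1
    simp only [Set.mem_singleton_iff] at hx2
    have key : (ka : ZMod L) * g - (kb : ZMod L) * g
        = (((ka : ℤ) - (kb : ℤ) : ℤ) : ZMod L) * g := by push_cast; ring
    refine ⟨(ka : ℤ) - (kb : ℤ), ?_, ?_, key⟩
    · intro h0
      apply hx2
      rw [key, h0, Int.cast_zero, zero_mul]
    · rw [abs_le]; omega
  · rintro ⟨d, hd0, hdw, rfl⟩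
    have hne := equi_inj hS d hd0 hdw
    refine ⟨?_, by simpa using hne⟩
    rw [Set.mem_sub]
    have hna : d.natAbs < w := by
      have : (d.natAbs : ℤ) < (w : ℤ) := by rw [Int.abs_eq_natAbs] at hdw; omega
      exact_mod_cast this
    rcases Int.natAbs_eq d with h | h
    · have hcast : (d : ZMod L) = (d.natAbs : ZMod L) := by
        conv_lhs => rw [h]
        exact Int.cast_natCast _
      refine ⟨(d.natAbs : ZMod L) * g, ⟨d.natAbs, hna, rfl⟩,
        (0 : ZMod L) * g, ⟨0, by omega, by norm_num⟩, ?_⟩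
      rw [zero_mul, sub_zero, hcast]
    · have hcast : (d : ZMod L) = -(d.natAbs : ZMod L) := by
        conv_lhs => rw [h]
        rw [Int.cast_neg, Int.cast_natCast]
      refine ⟨(0 : ZMod L) * g, ⟨0, by omega, by norm_num⟩,
        (d.natAbs : ZMod L) * g, ⟨d.natAbs, hna, rfl⟩, ?_⟩
      rw [zero_mul, zero_sub, hcast, neg_mul]

end Aux2

section CodeOfGens

private lemma code_of_gens {L w : ℕ} (hw : 2 ≤ w) (G : Finset ℤ)
    (Pa : ∀ g ∈ G, ∀ d : ℤ, d ≠ 0 → |d| ≤ (w : ℤ) - 1 → ¬ ((L : ℤ) ∣ g * d))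
    (Pb : ∀ g ∈ G, ∀ g' ∈ G, g ≠ g' → ∀ d d' : ℤ, d ≠ 0 → |d| ≤ (w : ℤ) - 1 →
      d' ≠ 0 → |d'| ≤ (w : ℤ) - 1 → ¬ ((L : ℤ) ∣ g * d - g' * d')) :
    ∃ C : Set (Set (ZMod L)), IsCAC L w C ∧ C.ncard = G.card := by
  classical
  set Sg : ℤ → Set (ZMod L) :=
    fun g => {x : ZMod L | ∃ k : ℕ, k < w ∧ x = (k : ZMod L) * ((g : ℤ) : ZMod L)} with hSg
  have hcard : ∀ g ∈ G, (Sg g).ncard = w := by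
    intro g hg
    show ({x : ZMod L | ∃ k : ℕ, k < w ∧ x = (k : ZMod L) * ((g : ℤ) : ZMod L)}).ncard = w
    rw [equi_set_eq, Set.ncard_coe_finset]
    rw [Finset.card_image_of_injOn, Finset.card_range]
    intro a ha b hb hab
    simp only [Finset.coe_range, Set.mem_Iio] at ha hb
    simp only at hab
    by_contra hne
    have hcast : ((g * ((a : ℤ) - (b : ℤ)) : ℤ) : ZMod L) = 0 := by
      push_cast
      linear_combination hab
    rw [ZMod.intCast_zmod_eq_zero_iff_dvd] at hcast
    exact Pa g hg ((a : ℤ) - b) (by omega) (by rw [abs_le]; omega) hcast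
  have hdstar : ∀ g ∈ G, dstar (Sg g)
      = {x : ZMod L | ∃ d : ℤ, d ≠ 0 ∧ |d| ≤ (w : ℤ) - 1 ∧ x = (d : ZMod L) * ((g : ℤ) : ZMod L)} :=
    fun g hg => equi_dstar hw (hcard g hg)
  have hdisj : ∀ g ∈ G, ∀ g' ∈ G, g ≠ g' → Disjoint (dstar (Sg g)) (dstar (Sg g')) := by
    intro g hg g' hg' hne
    rw [Set.disjoint_left]
    intro x hx hx'
    rw [hdstar g hg] at hx
    rw [hdstar g' hg'] at hx'
    obtain ⟨d, hd0, hdw, rfl⟩ := hx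
    obtain ⟨d', hd0', hdw', heq⟩ := hx'
    have hcast : ((g * d - g' * d' : ℤ) : ZMod L) = 0 := by
      push_cast
      linear_combination heq
    rw [ZMod.intCast_zmod_eq_zero_iff_dvd] at hcast
    exact Pb g hg g' hg' hne d d' hd0 hdw hd0' hdw' hcast
  have hone : (1 : ℤ) ≠ 0 ∧ |(1 : ℤ)| ≤ (w : ℤ) - 1 := by
    constructor
    · norm_num
    · rw [abs_one]; omega
  have hinj : Set.InjOn Sg ↑G := by
    intro g hg g' hg' heq
    by_contra hne
    have hx : ((1 : ℤ) : ZMod L) * ((g : ℤ) : ZMod L) ∈ dstar (Sg g) := by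
      rw [hdstar g hg]
      exact ⟨1, hone.1, hone.2, rfl⟩
    have hx' : ((1 : ℤ) : ZMod L) * ((g : ℤ) : ZMod L) ∈ dstar (Sg g') := by
      rw [← heq]; exact hx
    exact Set.disjoint_left.mp (hdisj g hg g' hg' hne) hx hx'
  refine ⟨Sg '' ↑G, ⟨?_, ?_⟩, ?_⟩
  · rintro S ⟨g, hg, rfl⟩
    exact hcard g hg
  · rintro S ⟨g, hg, rfl⟩ T ⟨g', hg', rfl⟩ hST
    exact hdisj g hg g' hg' (fun e => hST (by rw [e]))
  · rw [Set.ncard_image_of_injOn hinj, Set.ncard_coe_finset]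

end CodeOfGens

section Base

private lemma base_gens {p w : ℕ} (hp : p.Prime) (hw : 2 ≤ w) (hdvd : 2 * w - 2 ∣ p - 1)
    (h : ∃ C : Set (Set (ZMod p)), IsECAC p w C ∧ C.ncard = (p - 1) / (2 * w - 2)) :
    ∃ B : Finset ℤ, B.card * (2 * w - 2) = p - 1 ∧
      (∀ g ∈ B, ∀ d : ℤ, d ≠ 0 → |d| ≤ (w : ℤ) - 1 → ¬ ((p : ℤ) ∣ g * d)) ∧
      (∀ g ∈ B, ∀ g' ∈ B, g ≠ g' → ∀ d d' : ℤ, d ≠ 0 → |d| ≤ (w : ℤ) - 1 →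
        d' ≠ 0 → |d'| ≤ (w : ℤ) - 1 → ¬ ((p : ℤ) ∣ g * d - g' * d')) := by
  classical
  haveI : NeZero p := ⟨hp.pos.ne'⟩
  obtain ⟨C₀, ⟨⟨hsize, hdisj⟩, hequi⟩, hN⟩ := h
  have hfin : C₀.Finite := Set.toFinite _
  set gen : Set (ZMod p) → ZMod p :=
    fun S => if hS : IsEquiDiff p w S then hS.choose else 0 with hgendef
  have hgen : ∀ S ∈ C₀, S = {x : ZMod p | ∃ k : ℕ, k < w ∧ x = (k : ZMod p) * gen S} := by
    intro S hS
    have hSe := hequi S hS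
    rw [hgendef]
    simp only [dif_pos hSe]
    exact hSe.choose_spec
  have hvalcast : ∀ a : ZMod p, ((a.val : ℕ) : ZMod p) = a :=
    fun a => ZMod.natCast_rightInverse a
  -- the generator map is injective on C₀
  have hgeninj : ∀ S ∈ C₀, ∀ T ∈ C₀, ((gen S).val : ℤ) = ((gen T).val : ℤ) → S = T := by
    intro S hS T hT hval
    have : gen S = gen T := by
      have : (gen S).val = (gen T).val := by exact_mod_cast hval
      exact ZMod.val_injective p this
    rw [hgen S hS, hgen T hT, this]
  set B : Finset ℤ := hfin.toFinset.image (fun S => ((gen S).val : ℤ)) with hBdef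
  have hmemB : ∀ b ∈ B, ∃ S ∈ C₀, b = ((gen S).val : ℤ) := by
    intro b hb
    rw [hBdef] at hb
    obtain ⟨S, hS, rfl⟩ := Finset.mem_image.mp hb
    exact ⟨S, hfin.mem_toFinset.mp hS, rfl⟩
  have hcardB : B.card = C₀.ncard := by
    rw [hBdef, Finset.card_image_of_injOn, ← Set.ncard_eq_toFinset_card _ hfin]
    intro S hS T hT hval
    exact hgeninj S (hfin.mem_toFinset.mp hS) T (hfin.mem_toFinset.mp hT) hval
  -- size condition
  have hsz : ∀ S ∈ C₀,
      ({x : ZMod p | ∃ k : ℕ, k < w ∧ x = (k : ZMod p) * gen S}).ncard = w := by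
    intro S hS
    rw [← hgen S hS]
    exact hsize S hS
  have hPa : ∀ g ∈ B, ∀ d : ℤ, d ≠ 0 → |d| ≤ (w : ℤ) - 1 → ¬ ((p : ℤ) ∣ g * d) := by
    intro b hb d hd0 hdw hdvd'
    obtain ⟨S, hS, rfl⟩ := hmemB b hb
    rw [← ZMod.intCast_zmod_eq_zero_iff_dvd] at hdvd'
    apply equi_inj (hsz S hS) d hd0 hdw
    push_cast at hdvd'
    rw [hvalcast] at hdvd'
    linear_combination hdvd'
  refine ⟨B, ?_, hPa, ?_⟩
  · rw [hcardB, hN]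
    exact Nat.div_mul_cancel hdvd
  · intro b hb b' hb' hne d d' hd0 hdw hd0' hdw' hdvd'
    obtain ⟨S, hS, rfl⟩ := hmemB b hb
    obtain ⟨T, hT, rfl⟩ := hmemB b' hb'
    have hST : S ≠ T := fun e => hne (by rw [e])
    have heq : (d : ZMod p) * gen S = (d' : ZMod p) * gen T := by
      rw [← ZMod.intCast_zmod_eq_zero_iff_dvd] at hdvd'
      push_cast at hdvd'
      rw [hvalcast, hvalcast] at hdvd'
      linear_combination hdvd'
    have hx : (d : ZMod p) * gen S
        ∈ dstar {x : ZMod p | ∃ k : ℕ, k < w ∧ x = (k : ZMod p) * gen S} := by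
      rw [equi_dstar hw (hsz S hS)]
      exact ⟨d, hd0, hdw, rfl⟩
    have hx' : (d : ZMod p) * gen S
        ∈ dstar {x : ZMod p | ∃ k : ℕ, k < w ∧ x = (k : ZMod p) * gen T} := by
      rw [equi_dstar hw (hsz T hT)]
      exact ⟨d', hd0', hdw', heq⟩
    rw [← hgen S hS] at hx
    rw [← hgen T hT] at hx'
    exact Set.disjoint_left.mp (hdisj S hS T hT hST) hx hx'

end Base

section Step

private lemma gens_all {p w : ℕ} (hp : p.Prime) (hw : 2 ≤ w) (hwp : 2 * w - 2 ≤ p - 1)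
    (B : Finset ℤ) (hBcard : B.card * (2 * w - 2) = p - 1)
    (hBa : ∀ g ∈ B, ∀ d : ℤ, d ≠ 0 → |d| ≤ (w : ℤ) - 1 → ¬ ((p : ℤ) ∣ g * d))
    (hBb : ∀ g ∈ B, ∀ g' ∈ B, g ≠ g' → ∀ d d' : ℤ, d ≠ 0 → |d| ≤ (w : ℤ) - 1 →
        d' ≠ 0 → |d'| ≤ (w : ℤ) - 1 → ¬ ((p : ℤ) ∣ g * d - g' * d')) :
    ∀ m : ℕ, 1 ≤ m → ∃ G : Finset ℤ, G.card * (2 * w - 2) = p ^ m - 1 ∧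
      (∀ g ∈ G, ∀ d : ℤ, d ≠ 0 → |d| ≤ (w : ℤ) - 1 → ¬ ((p : ℤ) ^ m ∣ g * d)) ∧
      (∀ g ∈ G, ∀ g' ∈ G, g ≠ g' → ∀ d d' : ℤ, d ≠ 0 → |d| ≤ (w : ℤ) - 1 →
        d' ≠ 0 → |d'| ≤ (w : ℤ) - 1 → ¬ ((p : ℤ) ^ m ∣ g * d - g' * d')) := by
  classical
  have hp2 : 2 ≤ p := hp.two_le
  have hpz : (p : ℤ) ≠ 0 := by exact_mod_cast hp.pos.ne'
  have hpint : Prime (p : ℤ) := Nat.prime_iff_prime_int.mp hp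
  -- basic consequences of hBa/hBb
  have hone : (1 : ℤ) ≠ 0 ∧ |(1 : ℤ)| ≤ (w : ℤ) - 1 := ⟨one_ne_zero, by rw [abs_one]; omega⟩
  intro m hm
  induction m with
  | zero => omega
  | succ m ih =>
    rcases Nat.eq_or_lt_of_le hm with hm1 | hm2
    · -- m + 1 = 1 : base case
      refine ⟨B, ?_, ?_, ?_⟩ <;> rw [show m = 0 by omega]
      · simpa using hBcard
      · simpa using hBa
      · simpa using hBb
    · -- m ≥ 1
      obtain ⟨G, hGcard, hGa, hGb⟩ := ih (by omega)
      set G' : Finset ℤ := (G.image (fun g => (p : ℤ) * g)) ∪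
        ((Finset.range (p ^ m) ×ˢ B).image
          (fun q => (1 + (p : ℤ) * q.1) * q.2)) with hG'def
      have hndvd1ps : ∀ s : ℕ, ¬ ((p : ℤ) ∣ 1 + (p : ℤ) * s) := by
        intro s hdvd
        have : (p : ℤ) ∣ 1 := (dvd_add_right (Dvd.intro _ rfl)).mp (by rwa [add_comm] at hdvd)
        exact hpint.not_dvd_one this
      -- membership in second part
      have hmem2 : ∀ x ∈ (Finset.range (p ^ m) ×ˢ B).image
          (fun q : ℕ × ℤ => (1 + (p : ℤ) * q.1) * q.2),
          ∃ s : ℕ, s < p ^ m ∧ ∃ b ∈ B, x = (1 + (p : ℤ) * s) * b := by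
        intro x hx
        obtain ⟨⟨s, b⟩, hq, rfl⟩ := Finset.mem_image.mp hx
        rw [Finset.mem_product, Finset.mem_range] at hq
        exact ⟨s, hq.1, b, hq.2, rfl⟩
      have hpb : ∀ b ∈ B, ¬ ((p : ℤ) ∣ b) := by
        intro b hb hd
        exact hBa b hb 1 hone.1 hone.2 (by simpa using hd)
      have hbne : ∀ b ∈ B, b ≠ 0 := by
        intro b hb h0
        exact hpb b hb (h0 ▸ dvd_zero _)
      have hBmodp : ∀ b ∈ B, ∀ b' ∈ B, b ≠ b' → ¬ ((p : ℤ) ∣ b - b') := by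
        intro b hb b' hb' hne hd
        exact hBb b hb b' hb' hne 1 1 hone.1 hone.2 hone.1 hone.2 (by simpa using hd)
      have hpdvdsucc : (p : ℤ) ∣ (p : ℤ) ^ (m + 1) := dvd_pow_self _ (Nat.succ_ne_zero m)
      have hcancel : ∀ t : ℤ, (p : ℤ) ^ (m + 1) ∣ (p : ℤ) * t → (p : ℤ) ^ m ∣ t := by
        intro t ht
        rw [pow_succ'] at ht
        exact (mul_dvd_mul_iff_left hpz).mp ht
      -- Pa for G'
      have hPa : ∀ g ∈ G', ∀ d : ℤ, d ≠ 0 → |d| ≤ (w : ℤ) - 1 →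
          ¬ ((p : ℤ) ^ (m + 1) ∣ g * d) := by
        intro g hg d hd0 hdw hdvd
        rcases Finset.mem_union.mp hg with hg1 | hg2
        · obtain ⟨g₀, hg₀, rfl⟩ := Finset.mem_image.mp hg1
          exact hGa g₀ hg₀ d hd0 hdw (hcancel _ (by rwa [mul_assoc] at hdvd))
        · obtain ⟨s, hs, b, hb, rfl⟩ := hmem2 _ hg2
          have hpd : (p : ℤ) ∣ (1 + (p : ℤ) * s) * (b * d) := by
            rw [← mul_assoc]
            exact dvd_trans hpdvdsucc hdvd
          rcases hpint.dvd_mul.mp hpd with h1 | h2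
          · exact hndvd1ps s h1
          · exact hBa b hb d hd0 hdw h2
      -- Pb for G'
      have hPb : ∀ g ∈ G', ∀ g' ∈ G', g ≠ g' → ∀ d d' : ℤ, d ≠ 0 → |d| ≤ (w : ℤ) - 1 →
          d' ≠ 0 → |d'| ≤ (w : ℤ) - 1 → ¬ ((p : ℤ) ^ (m + 1) ∣ g * d - g' * d') := by
        intro g hg g' hg' hne d d' hd0 hdw hd0' hdw' hdvd
        have hpdiff : (p : ℤ) ∣ g * d - g' * d' := dvd_trans hpdvdsucc hdvd
        rcases Finset.mem_union.mp hg with hg1 | hg2 <;>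
          rcases Finset.mem_union.mp hg' with hg1' | hg2'
        · obtain ⟨g₀, hg₀, rfl⟩ := Finset.mem_image.mp hg1
          obtain ⟨g₀', hg₀', rfl⟩ := Finset.mem_image.mp hg1'
          have hne0 : g₀ ≠ g₀' := fun e => hne (by rw [e])
          have : (p : ℤ) ^ m ∣ g₀ * d - g₀' * d' := by
            apply hcancel
            rw [mul_sub, ← mul_assoc, ← mul_assoc]
            exact hdvd
          exact hGb g₀ hg₀ g₀' hg₀' hne0 d d' hd0 hdw hd0' hdw' this
        · obtain ⟨g₀, hg₀, rfl⟩ := Finset.mem_image.mp hg1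
          obtain ⟨s, hs, b, hb, rfl⟩ := hmem2 _ hg2'
          have hpg : (p : ℤ) ∣ (p : ℤ) * g₀ * d := by rw [mul_assoc]; exact Dvd.intro _ rfl
          have hpX : (p : ℤ) ∣ (1 + (p : ℤ) * s) * b * d' := by
            have h' := dvd_sub hpg hpdiff
            simpa [sub_sub_cancel] using h'
          rcases hpint.dvd_mul.mp (by rwa [mul_assoc] at hpX) with h1 | h2
          · exact hndvd1ps s h1
          · exact hBa b hb d' hd0' hdw' h2
        · obtain ⟨s, hs, b, hb, rfl⟩ := hmem2 _ hg2
          obtain ⟨g₀', hg₀', rfl⟩ := Finset.mem_image.mp hg1'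
          have hpg : (p : ℤ) ∣ (p : ℤ) * g₀' * d' := by rw [mul_assoc]; exact Dvd.intro _ rfl
          have hpX : (p : ℤ) ∣ (1 + (p : ℤ) * s) * b * d := by
            have h' := dvd_add hpdiff hpg
            simpa [sub_add_cancel] using h'
          rcases hpint.dvd_mul.mp (by rwa [mul_assoc] at hpX) with h1 | h2
          · exact hndvd1ps s h1
          · exact hBa b hb d hd0 hdw h2
        · obtain ⟨s, hs, b, hb, rfl⟩ := hmem2 _ hg2
          obtain ⟨s', hs', b', hb', rfl⟩ := hmem2 _ hg2'
          -- p divides b*d - b'*d'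
          have hkey : (1 + (p : ℤ) * s) * b * d - (1 + (p : ℤ) * s') * b' * d'
              = (b * d - b' * d') + (p : ℤ) * (s * b * d - s' * b' * d') := by ring
          have hpbd : (p : ℤ) ∣ b * d - b' * d' := by
            have h' := dvd_sub hpdiff (Dvd.intro _ rfl :
              (p : ℤ) ∣ (p : ℤ) * (s * b * d - s' * b' * d'))
            rw [hkey] at h'
            simpa using h'
          by_cases hbb : b = b'
          · subst hbb
            -- then p ∣ d - d', so d = d'
            have hpdd : (p : ℤ) ∣ b * (d - d') := by
              have : b * (d - d') = b * d - b * d' := by ring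
              rwa [this]
            have hdd : d = d' := by
              rcases hpint.dvd_mul.mp hpdd with h1 | h2
              · exact absurd h1 (hpb b hb)
              · by_contra hdne
                have hlt : (p : ℤ) ≤ |d - d'| :=
                  Int.le_of_dvd (abs_pos.mpr (sub_ne_zero.mpr hdne)) ((dvd_abs _ _).mpr h2)
                have habs : |d - d'| ≤ |d| + |d'| := abs_sub d d'
                have hcast : 2 * w ≤ p + 1 := by clear * - hwp hw hp2; omega
                have hcast' : 2 * (w : ℤ) ≤ (p : ℤ) + 1 := by exact_mod_cast hcast
                linarith [hlt, habs, hdw, hdw', hcast']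
            subst hdd
            -- then p^m ∣ s - s', so s = s'
            have hfact : (1 + (p : ℤ) * s) * b * d - (1 + (p : ℤ) * s') * b * d
                = (p : ℤ) * (((s : ℤ) - s') * (b * d)) := by ring
            have hps : (p : ℤ) ^ m ∣ ((s : ℤ) - s') * (b * d) := by
              apply hcancel
              rwa [hfact] at hdvd
            have hnpbd : ¬ ((p : ℤ) ∣ b * d) := hBa b hb d hd0 hdw
            have hss : (p : ℤ) ^ m ∣ (s : ℤ) - s' :=
              hpint.pow_dvd_of_dvd_mul_right m hnpbd hps
            have hsseq : s = s' := by
              by_contra hsne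
              have h0 : (s : ℤ) - s' ≠ 0 := by
                intro h0'
                exact hsne (by exact_mod_cast sub_eq_zero.mp h0')
              have hlt : (p : ℤ) ^ m ≤ |(s : ℤ) - s'| :=
                Int.le_of_dvd (abs_pos.mpr h0) ((dvd_abs _ _).mpr hss)
              have hs1 : (s : ℤ) < (p : ℤ) ^ m := by exact_mod_cast hs
              have hs2 : (s' : ℤ) < (p : ℤ) ^ m := by exact_mod_cast hs'
              have hs3 : (0 : ℤ) ≤ (s : ℤ) := Int.natCast_nonneg s
              have hs4 : (0 : ℤ) ≤ (s' : ℤ) := Int.natCast_nonneg s'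
              have h5 : |(s : ℤ) - (s' : ℤ)| < (p : ℤ) ^ m := by
                rw [abs_lt]
                constructor <;> linarith
              linarith [hlt, h5]
            exact hne (by rw [hsseq])
          · exact hBb b hb b' hb' hbb d d' hd0 hdw hd0' hdw' hpbd
      -- cardinality of G'
      have hdisjU : Disjoint (G.image (fun g => (p : ℤ) * g))
          ((Finset.range (p ^ m) ×ˢ B).image (fun q : ℕ × ℤ => (1 + (p : ℤ) * q.1) * q.2)) := by
        rw [Finset.disjoint_left]
        intro x hx1 hx2
        obtain ⟨g₀, hg₀, rfl⟩ := Finset.mem_image.mp hx1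
        obtain ⟨s, hs, b, hb, heq⟩ := hmem2 _ hx2
        have hpx : (p : ℤ) ∣ (1 + (p : ℤ) * s) * b := by
          rw [← heq]; exact Dvd.intro _ rfl
        rcases hpint.dvd_mul.mp hpx with h1 | h2
        · exact hndvd1ps s h1
        · exact hpb b hb h2
      have hcard1 : (G.image (fun g => (p : ℤ) * g)).card = G.card :=
        Finset.card_image_of_injective _ (mul_right_injective₀ hpz)
      have hcard2 : ((Finset.range (p ^ m) ×ˢ B).image
          (fun q : ℕ × ℤ => (1 + (p : ℤ) * q.1) * q.2)).card = p ^ m * B.card := by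
        rw [Finset.card_image_of_injOn, Finset.card_product, Finset.card_range]
        rintro ⟨s, b⟩ hq ⟨s', b'⟩ hq' heq
        simp only [Finset.coe_product, Set.mem_prod, Finset.mem_coe, Finset.mem_range] at hq hq'
        simp only at heq
        have hb := hq.2
        have hb' := hq'.2
        have hbb : b = b' := by
          by_contra hbb
          apply hBmodp b hb b' hb' hbb
          have : b - b' = (p : ℤ) * (s' * b' - s * b) := by linear_combination heq
          rw [this]
          exact Dvd.intro _ rfl
        subst hbb
        have hss : (s : ℤ) = s' := by
          have hb0 : b ≠ 0 := hbne b hb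
          have : (p : ℤ) * s * b = (p : ℤ) * s' * b := by linear_combination heq
          have h2 := mul_right_cancel₀ hb0 this
          exact mul_left_cancel₀ hpz h2
        have : s = s' := by exact_mod_cast hss
        rw [this]
      have hGcard' : G'.card * (2 * w - 2) = p ^ (m + 1) - 1 := by
        rw [hG'def, Finset.card_union_of_disjoint hdisjU, hcard1, hcard2,
          add_mul, hGcard, mul_assoc, hBcard]
        have h1 : 1 ≤ p ^ m := Nat.one_le_pow _ _ hp.pos
        have h2 : p ^ (m + 1) = p ^ m * p := pow_succ p m
        have h3 : p ^ m * (p - 1) = p ^ m * p - p ^ m := by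
          rw [Nat.mul_sub, mul_one]
        have h4 : p ^ m ≤ p ^ m * p := Nat.le_mul_of_pos_right _ hp.pos
        omega
      exact ⟨G', hGcard', hPa, hPb⟩

section Upper

private lemma upper_bound {p w r : ℕ} (hp : p.Prime) (hw : 2 ≤ w) (hwp : 2 * w - 1 ≤ p)
    (hr : 1 ≤ r) (C : Set (Set (ZMod (p ^ r)))) (hC : IsCAC (p ^ r) w C) :
    C.ncard * (2 * w - 2) ≤ p ^ r - 1 := by
  classical
  haveI : NeZero (p ^ r) := ⟨pow_ne_zero r hp.pos.ne'⟩
  obtain ⟨hsize, hdisj⟩ := hC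
  have hdlow : ∀ S ∈ C, 2 * w - 2 ≤ (dstar S).ncard := by
    intro S hS
    have hSfin : S.Finite := Set.toFinite _
    set F := hSfin.toFinset with hF
    have hFcard : F.card = w := by
      rw [← Set.ncard_eq_toFinset_card S hSfin]
      exact hsize S hS
    have hFne : F.Nonempty := Finset.card_pos.mp (by omega)
    have hFneg : (-F).Nonempty := hFne.neg
    have hcd := cauchy_davenport_minOrder_add hFne hFneg
    have hne1 : p ^ r ≠ 1 := (Nat.one_lt_pow (by omega) hp.one_lt).ne'
    have hmin : AddMonoid.minOrder (ZMod (p ^ r)) = (p : ℕ∞) := by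
      rw [ZMod.minOrder (pow_ne_zero r hp.pos.ne') hne1, hp.pow_minFac (by omega)]
    rw [hmin, Finset.card_neg, hFcard] at hcd
    have hminr : min ((p : ℕ∞)) ((w + w - 1 : ℕ) : ℕ∞) = ((w + w - 1 : ℕ) : ℕ∞) :=
      min_eq_right (by exact_mod_cast (by omega : w + w - 1 ≤ p))
    rw [show w + w - 1 = w + w - 1 from rfl] at hcd
    have hcd' : w + w - 1 ≤ (F + -F).card := by
      rw [hminr] at hcd
      exact_mod_cast hcd
    have hsub : F - F = F + -F := sub_eq_add_neg F F
    have hSS : (S - S).ncard = (F - F).card := by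
      rw [← Set.ncard_coe_finset (F - F), Finset.coe_sub, hSfin.coe_toFinset]
    have hsplit : (S - S).ncard ≤ (dstar S).ncard + 1 := by
      have hsub2 : S - S ⊆ dstar S ∪ {0} := by
        intro x hx
        by_cases hx0 : x = 0
        · exact Set.mem_union_right _ (by simp [hx0])
        · exact Set.mem_union_left _ ⟨hx, by simp [hx0]⟩
      calc (S - S).ncard ≤ (dstar S ∪ {0}).ncard :=
            Set.ncard_le_ncard hsub2 ((Set.toFinite _).union (Set.finite_singleton 0))
        _ ≤ (dstar S).ncard + ({0} : Set (ZMod (p ^ r))).ncard := Set.ncard_union_le _ _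
        _ = (dstar S).ncard + 1 := by rw [Set.ncard_singleton]
    rw [hSS, hsub] at hsplit
    omega
  -- summation
  have hCfin : C.Finite := Set.toFinite _
  set FC := hCfin.toFinset with hFC
  set DS : Set (ZMod (p ^ r)) → Finset (ZMod (p ^ r)) :=
    fun S => (Set.toFinite (dstar S)).toFinset with hDS
  have hDScard : ∀ S, (dstar S).ncard = (DS S).card := by
    intro S
    rw [hDS]
    exact Set.ncard_eq_toFinset_card _ _
  have hpairwise : ∀ S ∈ FC, ∀ T ∈ FC, S ≠ T → Disjoint (DS S) (DS T) := by
    intro S hS T hT hne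
    rw [hDS, Set.Finite.disjoint_toFinset]
    exact hdisj S (hCfin.mem_toFinset.mp hS) T (hCfin.mem_toFinset.mp hT) hne
  have hbiu : (FC.biUnion DS).card = ∑ S ∈ FC, (DS S).card :=
    Finset.card_biUnion hpairwise
  have hsubuniv : FC.biUnion DS ⊆ Finset.univ.erase 0 := by
    intro x hx
    obtain ⟨S, hS, hxS⟩ := Finset.mem_biUnion.mp hx
    rw [hDS, Set.Finite.mem_toFinset] at hxS
    exact Finset.mem_erase.mpr ⟨hxS.2, Finset.mem_univ x⟩
  have hcarduniv : (Finset.univ.erase (0 : ZMod (p ^ r))).card = p ^ r - 1 := by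
    rw [Finset.card_erase_of_mem (Finset.mem_univ _), Finset.card_univ, ZMod.card]
  have hsumle : ∑ S ∈ FC, (DS S).card ≤ p ^ r - 1 := by
    rw [← hbiu, ← hcarduniv]
    exact Finset.card_le_card hsubuniv
  have hlower : FC.card * (2 * w - 2) ≤ ∑ S ∈ FC, (DS S).card := by
    calc FC.card * (2 * w - 2) = ∑ _S ∈ FC, (2 * w - 2) := by
          rw [Finset.sum_const, smul_eq_mul, mul_comm]
      _ ≤ ∑ S ∈ FC, (DS S).card := by
          apply Finset.sum_le_sum
          intro S hS
          rw [← hDScard]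
          exact hdlow S (hCfin.mem_toFinset.mp hS)
  have hCcard : C.ncard = FC.card := Set.ncard_eq_toFinset_card _ _
  rw [hCcard]
  exact le_trans hlower hsumle

end Upper

theorem stmt12 (p w : ℕ) (hp : p.Prime) (hdvd : 2 * w - 2 ∣ p - 1)
    (h : ∃ C : Set (Set (ZMod p)), IsECAC p w C ∧ C.ncard = (p - 1) / (2 * w - 2)) :
    ∀ r : ℕ, 1 ≤ r →
      IsGreatest
        {n : ℕ | ∃ C : Set (Set (ZMod (p ^ r))), IsCAC (p ^ r) w C ∧ C.ncard = n}
        ((p ^ r - 1) / (2 * w - 2)) := by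
  intro r hr
  have hp2 : 2 ≤ p := hp.two_le
  have hw : 2 ≤ w := by
    by_contra hw'
    have h0 : 2 * w - 2 = 0 := by omega
    rw [h0] at hdvd
    have := Nat.eq_zero_of_zero_dvd hdvd
    omega
  have hwp : 2 * w - 2 ≤ p - 1 := Nat.le_of_dvd (by omega) hdvd
  obtain ⟨B, hBcard, hBa, hBb⟩ := base_gens hp hw hdvd h
  obtain ⟨G, hGcard, hGa, hGb⟩ := gens_all hp hw hwp B hBcard hBa hBb r hr
  have hcast : ∀ d : ℤ, ((p ^ r : ℕ) : ℤ) ∣ d ↔ (p : ℤ) ^ r ∣ d := by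
    intro d
    constructor <;> intro hd <;> [rwa [Nat.cast_pow] at hd; rwa [Nat.cast_pow]]
  obtain ⟨C, hCcac, hCcard⟩ := code_of_gens hw G
    (fun g hg d hd0 hdw hdd => hGa g hg d hd0 hdw ((hcast _).mp hdd))
    (fun g hg g' hg' hne d d' hd0 hdw hd0' hdw' hdd =>
      hGb g hg g' hg' hne d d' hd0 hdw hd0' hdw' ((hcast _).mp hdd))
  constructor
  · refine ⟨C, hCcac, ?_⟩
    rw [hCcard]
    exact (Nat.div_eq_of_eq_mul_left (by omega) hGcard.symm).symm
  · rintro n ⟨C', hC', rfl⟩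
    have := upper_bound hp hw (by omega) hr C' hC'
    rw [Nat.le_div_iff_mul_le (by omega : 0 < 2 * w - 2)]
    exact this
end Step
end

section
/- For any odd prime p and positive integer r, the maximum size of a conflict-avoiding code of length p^r and weight (p+1)/2 equals (p^r − 1)/(p − 1). -/
open Pointwise

lemma cac_int_ne (p r j : ℕ) (hp : p.Prime) (hj : j < r) (t : ℕ) (c : ℤ)
    (hc : c ≠ 0) (hcp : |c| < p) :
    ¬ ((p:ℤ)^r ∣ c * ((p:ℤ)^j * (1 + p*t))) := by
  intro h
  have hpp : Prime (p:ℤ) := Nat.prime_iff_prime_int.mp hp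
  have h1 : (p:ℤ)^j * (p:ℤ) ∣ (p:ℤ)^j * (c * (1 + p*t)) := by
    rw [← pow_succ]
    calc (p:ℤ)^(j+1) ∣ (p:ℤ)^r := pow_dvd_pow _ (by omega)
    _ ∣ c * ((p:ℤ)^j * (1 + p*t)) := h
    _ = (p:ℤ)^j * (c * (1 + p*t)) := by ring
  have hpj : ((p:ℤ)^j) ≠ 0 := pow_ne_zero j (by exact_mod_cast hp.ne_zero)
  have h3 : (p:ℤ) ∣ c * (1 + p*t) := (mul_dvd_mul_iff_left hpj).mp h1
  rcases hpp.dvd_mul.mp h3 with h4 | h4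
  · have := Int.le_of_dvd (abs_pos.mpr hc) ((dvd_abs (p:ℤ) c).mpr h4)
    omega
  · have h5 : (p:ℤ) ∣ 1 := by
      have he : (1:ℤ) = (1 + p*t) - p*t := by ring
      rw [he]
      exact dvd_sub h4 (Dvd.intro (t:ℤ) rfl)
    have := Int.le_of_dvd one_pos h5
    have := hp.two_le
    omega

lemma cac_int_inj (p r j j' t t' : ℕ) (hp : p.Prime) (hj : j < r) (hj' : j' < r)
    (ht : t < p^(r-1-j)) (ht' : t' < p^(r-1-j')) (c c' : ℤ)
    (hc : c ≠ 0) (hc' : c' ≠ 0) (hcp : 2*|c| < p) (hcp' : 2*|c'| < p)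
    (h : (p:ℤ)^r ∣ c * ((p:ℤ)^j * (1 + p*t)) - c' * ((p:ℤ)^j' * (1 + p*t'))) :
    j = j' ∧ t = t' ∧ c = c' := by
  have hpp : Prime (p:ℤ) := Nat.prime_iff_prime_int.mp hp
  have hp2 := hp.two_le
  have hpj : ∀ m : ℕ, ((p:ℤ)^m) ≠ 0 := fun m => pow_ne_zero m (by exact_mod_cast hp.ne_zero)
  -- step 1 : j = j'
  have key : ∀ (a b ta tb : ℕ) (ca cb : ℤ), ca ≠ 0 → |ca| < p → a < b → b < r →
      ¬ ((p:ℤ)^r ∣ ca * ((p:ℤ)^a * (1 + p*ta)) - cb * ((p:ℤ)^b * (1 + p*tb))) := by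
    intro a b ta tb ca cb hca hcap hab hbr hdvd
    have h1 : (p:ℤ)^(a+1) ∣ ca * ((p:ℤ)^a * (1 + p*ta)) := by
      have d1 : (p:ℤ)^(a+1) ∣ cb * ((p:ℤ)^b * (1 + p*tb)) := by
        have : (p:ℤ)^(a+1) ∣ (p:ℤ)^b := pow_dvd_pow _ (by omega)
        exact Dvd.dvd.mul_left (Dvd.dvd.mul_right this _) _
      have d2 : (p:ℤ)^(a+1) ∣ ca * ((p:ℤ)^a * (1 + p*ta)) - cb * ((p:ℤ)^b * (1 + p*tb)) :=
        dvd_trans (pow_dvd_pow _ (by omega)) hdvd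
      have := dvd_add d2 d1
      simpa using this
    exact cac_int_ne p (a+1) a hp (by omega) ta ca hca hcap h1
  have hjj : j = j' := by
    by_contra hne
    rcases Nat.lt_or_ge j j' with hlt | hge
    · exact key j j' t t' c c' hc (by omega) hlt hj' h
    · have hlt : j' < j := by omega
      exact key j' j t' t c' c hc' (by omega) hlt hj (by
        have : c' * ((p:ℤ)^j' * (1 + p*t')) - c * ((p:ℤ)^j * (1 + p*t)) =
            -(c * ((p:ℤ)^j * (1 + p*t)) - c' * ((p:ℤ)^j' * (1 + p*t'))) := by ring
        rw [this]
        exact dvd_neg.mpr h)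
  subst hjj
  -- step 2 : cancel p^j
  have h2 : (p:ℤ)^(r-j) ∣ c * (1 + p*t) - c' * (1 + p*t') := by
    have he : (p:ℤ)^j * ((p:ℤ)^(r-j)) = (p:ℤ)^r := by
      rw [← pow_add]; congr 1; omega
    have he2 : c * ((p:ℤ)^j * (1 + p*t)) - c' * ((p:ℤ)^j * (1 + p*t')) =
        (p:ℤ)^j * (c * (1 + p*t) - c' * (1 + p*t')) := by ring
    rw [← he, he2] at h
    exact (mul_dvd_mul_iff_left (hpj j)).mp h
  -- step 3 : c = c'
  have h3 : (p:ℤ) ∣ c - c' := by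
    have d1 : (p:ℤ) ∣ c * (1 + p*t) - c' * (1 + p*t') :=
      dvd_trans (by simpa using pow_dvd_pow (p:ℤ) (show 1 ≤ r - j by omega)) h2
    have he : c - c' = (c * (1 + p*t) - c' * (1 + p*t')) - p * (c*t - c'*t') := by ring
    rw [he]
    exact dvd_sub d1 (Dvd.intro _ rfl)
  have hcc : c = c' := by
    rcases eq_or_ne (c - c') 0 with h0 | h0
    · omega
    · have h6 := Int.le_of_dvd (abs_pos.mpr h0) ((dvd_abs (p:ℤ) _).mpr h3)
      have h7 : |c - c'| ≤ |c| + |c'| := abs_sub c c'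
      omega
  subst hcc
  refine ⟨rfl, ?_, rfl⟩
  -- step 4 : t = t'
  have h4 : (p:ℤ)^(r-j) ∣ (p:ℤ) * ((t:ℤ) - t') := by
    have hcop : IsCoprime ((p:ℤ)^(r-j)) c := by
      apply IsCoprime.pow_left
      rw [hpp.coprime_iff_not_dvd]
      intro hd
      have := Int.le_of_dvd (abs_pos.mpr hc) ((dvd_abs (p:ℤ) c).mpr hd)
      omega
    apply hcop.dvd_of_dvd_mul_right
    have he : (p:ℤ) * ((t:ℤ) - t') * c = c * (1 + p*t) - c * (1 + p*t') := by ring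
    rw [he]
    exact h2
  have h5 : (p:ℤ)^(r-1-j) ∣ (t:ℤ) - t' := by
    have he : (p:ℤ) * (p:ℤ)^(r-1-j) = (p:ℤ)^(r-j) := by
      rw [← pow_succ']; congr 1; omega
    rw [← he] at h4
    exact (mul_dvd_mul_iff_left (by exact_mod_cast hp.ne_zero : (p:ℤ) ≠ 0)).mp h4
  rcases eq_or_ne ((t:ℤ) - t') 0 with h0 | h0
  · omega
  · have hle := Int.le_of_dvd (abs_pos.mpr h0) ((dvd_abs _ _).mpr h5)
    have hlt : |(t:ℤ) - t'| < (p:ℤ)^(r-1-j) := by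
      have h1 : (t:ℤ) < (p:ℤ)^(r-1-j) := by exact_mod_cast ht
      have h1' : (t':ℤ) < (p:ℤ)^(r-1-j) := by exact_mod_cast ht'
      have h2' : (0:ℤ) ≤ t := Int.natCast_nonneg t
      have h2'' : (0:ℤ) ≤ t' := Int.natCast_nonneg t'
      rw [abs_sub_lt_iff]
      omega
    omega

/-- generator of the `(j,t)` codeword, as an integer -/
def cacGenZ (p j t : ℕ) : ℤ := (p:ℤ)^j * (1 + p*t)

/-- the `(j,t)` codeword generator in `ZMod (p^r)` -/
def cacGen (p r j t : ℕ) : ZMod (p^r) := ((cacGenZ p j t : ℤ) : ZMod (p^r))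

lemma cac_smul_ne_zero (p r j t : ℕ) (hp : p.Prime) (hj : j < r) (c : ℤ)
    (hc : c ≠ 0) (hcp : |c| < p) :
    (c : ZMod (p^r)) * cacGen p r j t ≠ 0 := by
  intro h
  have h2 : ((c * cacGenZ p j t : ℤ) : ZMod (p^r)) = 0 := by
    push_cast; rw [← h]; rfl
  rw [ZMod.intCast_zmod_eq_zero_iff_dvd] at h2
  push_cast at h2
  unfold cacGenZ at h2
  exact cac_int_ne p r j hp hj t c hc hcp h2

lemma cac_smul_inj (p r j j' t t' : ℕ) (hp : p.Prime) (hj : j < r) (hj' : j' < r)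
    (ht : t < p^(r-1-j)) (ht' : t' < p^(r-1-j')) (c c' : ℤ)
    (hc : c ≠ 0) (hc' : c' ≠ 0) (hcp : 2*|c| < p) (hcp' : 2*|c'| < p)
    (h : (c : ZMod (p^r)) * cacGen p r j t = (c' : ZMod (p^r)) * cacGen p r j' t') :
    j = j' ∧ t = t' ∧ c = c' := by
  have h2 : ((c * cacGenZ p j t - c' * cacGenZ p j' t' : ℤ) : ZMod (p^r)) = 0 := by
    push_cast
    rw [show ((c:ZMod (p^r)) * ((cacGenZ p j t : ℤ) : ZMod (p^r)) = (c' : ZMod (p^r)) * ((cacGenZ p j' t' : ℤ) : ZMod (p^r))) from h]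
    ring
  rw [ZMod.intCast_zmod_eq_zero_iff_dvd] at h2
  push_cast at h2
  unfold cacGenZ at h2
  exact cac_int_inj p r j j' t t' hp hj hj' ht ht' c c' hc hc' hcp hcp' h2

/-- the `(j,t)` codeword -/
def cacS (p r j t : ℕ) : Set (ZMod (p^r)) :=
  {x | ∃ k : ℕ, k < (p+1)/2 ∧ x = (k : ZMod (p^r)) * cacGen p r j t}

lemma cacS_ncard (p r j t : ℕ) (hp : p.Prime) (hodd : Odd p) (hj : j < r) :
    (cacS p r j t).ncard = (p+1)/2 := by
  have hp2 := hp.two_le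
  have himg : cacS p r j t
      = (fun k : ℕ => (k : ZMod (p^r)) * cacGen p r j t) '' (Set.Iio ((p+1)/2)) := by
    ext x
    simp only [cacS, Set.mem_setOf_eq, Set.mem_image, Set.mem_Iio]
    constructor
    · rintro ⟨k, hk, rfl⟩; exact ⟨k, hk, rfl⟩
    · rintro ⟨k, hk, rfl⟩; exact ⟨k, hk, rfl⟩
  have hinj : Set.InjOn (fun k : ℕ => (k : ZMod (p^r)) * cacGen p r j t)
      (Set.Iio ((p+1)/2)) := by
    intro a ha b hb hab
    simp only [Set.mem_Iio] at ha hb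
    by_contra hne
    have h1 : (((a:ℤ) - b : ℤ) : ZMod (p^r)) * cacGen p r j t = 0 := by
      push_cast
      simp only at hab
      rw [sub_mul, hab]
      ring
    have hps : 2 * ((p+1)/2) = p + 1 := by
      obtain ⟨m, hm⟩ := hodd; omega
    refine cac_smul_ne_zero p r j t hp hj ((a:ℤ) - b) (by
        intro h0
        apply hne
        omega) (by
        have ha' : (a:ℤ) < (p+1)/2 := by exact_mod_cast ha
        have hb' : (b:ℤ) < (p+1)/2 := by exact_mod_cast hb
        have : ((((p:ℕ)+1)/2 : ℕ) : ℤ) ≤ p := by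
          have : (p+1)/2 ≤ p := by omega
          exact_mod_cast this
        rw [abs_sub_lt_iff]
        push_cast at ha' hb' ⊢
        omega) h1
  rw [himg, Set.ncard_image_of_injOn hinj]
  have : (Set.Iio ((p+1)/2)) = ↑(Finset.range ((p+1)/2)) := by ext x; simp
  rw [this, Set.ncard_coe_finset, Finset.card_range]

lemma dstar_cacS (p r j t : ℕ) (hp : p.Prime) (hodd : Odd p) (hj : j < r) :
    dstar (cacS p r j t)
      = {x | ∃ c : ℤ, c ≠ 0 ∧ 2*|c| < p ∧ x = (c : ZMod (p^r)) * cacGen p r j t} := by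
  have hp2 := hp.two_le
  have hps : 2 * ((p+1)/2) = p + 1 := by obtain ⟨m, hm⟩ := hodd; omega
  ext x
  simp only [dstar, Set.mem_diff, Set.mem_singleton_iff, Set.mem_setOf_eq]
  constructor
  · rintro ⟨hx, hx0⟩
    rw [Set.mem_sub] at hx
    obtain ⟨a, ha, b, hb, rfl⟩ := hx
    obtain ⟨k, hk, rfl⟩ := ha
    obtain ⟨k', hk', rfl⟩ := hb
    refine ⟨(k:ℤ) - k', ?_, ?_, ?_⟩
    · intro h0
      apply hx0
      have : k = k' := by omega
      rw [this]; ring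
    · have h1 : (k:ℤ) < (((p+1)/2 : ℕ) : ℤ) := by exact_mod_cast hk
      have h2 : (k':ℤ) < (((p+1)/2 : ℕ) : ℤ) := by exact_mod_cast hk'
      have h3 : (2:ℤ) * (((p+1)/2 : ℕ) : ℤ) = p + 1 := by exact_mod_cast hps
      rcases abs_cases ((k:ℤ) - k') with ⟨he, _⟩ | ⟨he, _⟩ <;> omega
    · push_cast; ring
  · rintro ⟨c, hc0, hcp, rfl⟩
    have hcpabs : |c| < p := by omega
    refine ⟨?_, cac_smul_ne_zero p r j t hp hj c hc0 hcpabs⟩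
    rw [Set.mem_sub]
    rcases lt_or_gt_of_ne hc0 with hneg | hpos
    · have habs := abs_of_neg hneg
      refine ⟨(0:ZMod (p^r)), ⟨0, by omega, by push_cast; ring⟩,
        (((-c).toNat : ℕ) : ZMod (p^r)) * cacGen p r j t, ⟨(-c).toNat, ?_, rfl⟩, ?_⟩
      · have : ((-c).toNat : ℤ) = -c := Int.toNat_of_nonneg (by omega)
        omega
      · have hcast : (((-c).toNat : ℕ) : ZMod (p^r)) = ((-c : ℤ) : ZMod (p^r)) := by
          rw [← Int.cast_natCast, Int.toNat_of_nonneg (by omega)]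
        rw [hcast]
        push_cast
        ring
    · have habs := abs_of_pos hpos
      refine ⟨((c.toNat : ℕ) : ZMod (p^r)) * cacGen p r j t, ⟨c.toNat, ?_, rfl⟩,
        (0:ZMod (p^r)), ⟨0, by omega, by push_cast; ring⟩, ?_⟩
      · have : (c.toNat : ℤ) = c := Int.toNat_of_nonneg (by omega)
        omega
      · have hcast : ((c.toNat : ℕ) : ZMod (p^r)) = ((c : ℤ) : ZMod (p^r)) := by
          rw [← Int.cast_natCast, Int.toNat_of_nonneg (by omega)]
        rw [hcast]
        ring

lemma cac_dstar_disjoint (p r j j' t t' : ℕ) (hp : p.Prime) (hodd : Odd p)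
    (hj : j < r) (hj' : j' < r) (ht : t < p^(r-1-j)) (ht' : t' < p^(r-1-j'))
    (hne : ¬(j = j' ∧ t = t')) :
    Disjoint (dstar (cacS p r j t)) (dstar (cacS p r j' t')) := by
  rw [Set.disjoint_left]
  intro x hx hx'
  rw [dstar_cacS p r j t hp hodd hj] at hx
  rw [dstar_cacS p r j' t' hp hodd hj'] at hx'
  obtain ⟨c, hc0, hcp, rfl⟩ := hx
  obtain ⟨c', hc0', hcp', he⟩ := hx'
  obtain ⟨h1, h2, h3⟩ := cac_smul_inj p r j j' t t' hp hj hj' ht ht' c c' hc0 hc0' hcp hcp' he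
  exact hne ⟨h1, h2⟩

lemma cac_dstar_nonempty (p r j t : ℕ) (hp : p.Prime) (hodd : Odd p) (hj : j < r) :
    (dstar (cacS p r j t)).Nonempty := by
  have hp3 : 3 ≤ p := by
    have := hp.two_le
    obtain ⟨m, hm⟩ := hodd
    omega
  rw [dstar_cacS p r j t hp hodd hj]
  exact ⟨(1 : ZMod (p^r)) * cacGen p r j t, 1, one_ne_zero, by simp; omega, by push_cast; ring⟩

lemma cac_geom_sum (p r : ℕ) (hp : 2 ≤ p) :
    ∑ i ∈ Finset.range r, p^i = (p^r - 1) / (p - 1) := by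
  have key : (p - 1) * ∑ i ∈ Finset.range r, p^i = p^r - 1 := by
    induction r with
    | zero => simp
    | succ n ih =>
      rw [Finset.sum_range_succ, Nat.mul_add, ih, pow_succ]
      have h1 : 1 ≤ p^n := Nat.one_le_pow n p (by omega)
      have h2 : p^n ≤ p^n * p := Nat.le_mul_of_pos_right _ (by omega)
      rw [Nat.sub_mul, Nat.one_mul, mul_comm p (p^n)]
      omega
  rw [← key, Nat.mul_div_cancel_left _ (by omega : 0 < p - 1)]


lemma pow_minFac (p r : ℕ) (hp : p.Prime) (hr : 1 ≤ r) : (p^r).minFac = p := by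
  have hpr1 : p^r ≠ 1 := by
    intro h
    have := hp.two_le
    have : p ≤ p^r := Nat.le_self_pow (by omega) p
    omega
  have h2 : (p^r).minFac.Prime := Nat.minFac_prime hpr1
  have h3 : (p^r).minFac ∣ p := h2.dvd_of_dvd_pow (Nat.minFac_dvd _)
  exact (Nat.prime_dvd_prime_iff_eq h2 hp).mp h3

lemma dstar_ncard_ge (p r : ℕ) (hp : p.Prime) (hodd : Odd p) (hr : 1 ≤ r)
    (S : Set (ZMod (p^r))) (hS : S.ncard = (p+1)/2) :
    p - 1 ≤ (dstar S).ncard := by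
  have hp2 := hp.two_le
  have hps : 2 * ((p+1)/2) = p + 1 := by obtain ⟨m, hm⟩ := hodd; omega
  haveI : NeZero (p^r) := ⟨by positivity⟩
  have hSfin : S.Finite := Set.toFinite S
  set s : Finset (ZMod (p^r)) := hSfin.toFinset with hs
  have hsc : ↑s = S := hSfin.coe_toFinset
  have hscard : s.card = (p+1)/2 := by
    rw [← Set.ncard_coe_finset, hsc, hS]
  have hsne : s.Nonempty := by
    rw [← Finset.card_pos, hscard]; omega
  have hCD := cauchy_davenport_minOrder_add hsne hsne.neg
  rw [ZMod.minOrder (by positivity) (by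
      intro h
      have : p ≤ p^r := Nat.le_self_pow (by omega) p
      omega), pow_minFac p r hp hr, Finset.card_neg, hscard] at hCD
  have hmin : min ((p:ℕ∞)) (((p+1)/2 + (p+1)/2 - 1 : ℕ) : ℕ∞) = (p:ℕ∞) := by
    rw [min_eq_left]
    exact_mod_cast Nat.le_of_eq (by omega)
  rw [hmin] at hCD
  have hCD' : p ≤ (s + -s).card := by exact_mod_cast hCD
  rw [← sub_eq_add_neg s s] at hCD'
  -- now dstar S = ↑((s-s).erase 0)
  have hmem0 : (0 : ZMod (p^r)) ∈ s - s := by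
    obtain ⟨a, ha⟩ := hsne
    rw [Finset.mem_sub]
    exact ⟨a, ha, a, ha, by ring⟩
  have hde : dstar S = ↑((s - s).erase 0) := by
    rw [dstar, ← hsc, ← Finset.coe_sub]
    ext x
    simp [Finset.mem_erase, and_comm]
  rw [hde, Set.ncard_coe_finset, Finset.card_erase_of_mem hmem0]
  omega

theorem stmt18 (p r : ℕ) (hp : p.Prime) (hodd : Odd p) (hr : 1 ≤ r) :
    IsGreatest
      {n : ℕ | ∃ C : Set (Set (ZMod (p ^ r))),
        IsCAC (p ^ r) ((p + 1) / 2) C ∧ C.ncard = n}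
      ((p ^ r - 1) / (p - 1)) := by
  have hp2 := hp.two_le
  have hp3 : 3 ≤ p := by obtain ⟨m, hm⟩ := hodd; omega
  haveI : NeZero (p^r) := ⟨by positivity⟩
  constructor
  · -- membership : the construction
    classical
    set I : Finset (ℕ × ℕ) := (Finset.range r).biUnion
        (fun j => (Finset.range (p^(r-1-j))).image (fun t => (j, t))) with hI
    have hmemI : ∀ jt : ℕ × ℕ, jt ∈ I ↔ jt.1 < r ∧ jt.2 < p^(r-1-jt.1) := by
      rintro ⟨j, t⟩
      simp only [hI, Finset.mem_biUnion, Finset.mem_range, Finset.mem_image]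
      constructor
      · rintro ⟨a, ha, b, hb, he⟩
        obtain ⟨rfl, rfl⟩ := Prod.mk.injEq j t a b ▸ he.symm
        exact ⟨ha, hb⟩
      · rintro ⟨h1, h2⟩
        exact ⟨j, h1, t, h2, rfl⟩
    have hIcard : I.card = (p^r - 1) / (p - 1) := by
      rw [hI, Finset.card_biUnion]
      · have h1 : ∀ j ∈ Finset.range r,
            ((Finset.range (p^(r-1-j))).image (fun t => (j, t))).card = p^(r-1-j) := by
          intro j _
          rw [Finset.card_image_of_injective _ (fun a b h => congrArg Prod.snd h),
            Finset.card_range]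
        rw [Finset.sum_congr rfl h1, Finset.sum_range_reflect (fun i => p^i) r]
        exact cac_geom_sum p r hp2
      · intro a _ b _ hab
        rw [Function.onFun, Finset.disjoint_left]
        rintro ⟨x, y⟩ hx hy
        simp only [Finset.mem_image, Finset.mem_range] at hx hy
        obtain ⟨t1, _, he1⟩ := hx
        obtain ⟨t2, _, he2⟩ := hy
        exact hab (by
          have := congrArg Prod.fst he1
          have := congrArg Prod.fst he2
          simp_all)
    have hinj : Set.InjOn (fun jt : ℕ × ℕ => cacS p r jt.1 jt.2) ↑I := by
      rintro ⟨j, t⟩ hjt ⟨j', t'⟩ hjt' he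
      simp only [Finset.mem_coe] at hjt hjt'
      rw [hmemI] at hjt hjt'
      by_contra hne
      have hne' : ¬(j = j' ∧ t = t') := by
        intro ⟨h1, h2⟩; exact hne (by simp [h1, h2])
      have hdisj := cac_dstar_disjoint p r j j' t t' hp hodd hjt.1 hjt'.1 hjt.2 hjt'.2 hne'
      simp only at he
      rw [he] at hdisj
      obtain ⟨x, hx⟩ := cac_dstar_nonempty p r j' t' hp hodd hjt'.1
      exact (Set.disjoint_left.mp hdisj hx) hx
    refine ⟨(fun jt : ℕ × ℕ => cacS p r jt.1 jt.2) '' ↑I, ⟨⟨?_, ?_⟩, ?_⟩⟩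
    · rintro S ⟨⟨j, t⟩, hjt, rfl⟩
      simp only [Finset.mem_coe] at hjt
      rw [hmemI] at hjt
      exact cacS_ncard p r j t hp hodd hjt.1
    · rintro S ⟨⟨j, t⟩, hjt, rfl⟩ T ⟨⟨j', t'⟩, hjt', rfl⟩ hST
      simp only [Finset.mem_coe] at hjt hjt'
      rw [hmemI] at hjt hjt'
      refine cac_dstar_disjoint p r j j' t t' hp hodd hjt.1 hjt'.1 hjt.2 hjt'.2 ?_
      rintro ⟨rfl, rfl⟩
      exact hST rfl
    · rw [Set.ncard_image_of_injOn hinj, Set.ncard_coe_finset, hIcard]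
  · -- upper bound
    rintro n ⟨C, ⟨hw, hdisj⟩, rfl⟩
    classical
    have hCfin : C.Finite := Set.toFinite C
    set 𝒞 : Finset (Set (ZMod (p^r))) := hCfin.toFinset with h𝒞
    have h𝒞c : ∀ S, S ∈ 𝒞 ↔ S ∈ C := fun S => hCfin.mem_toFinset
    have hd : ∀ S : Set (ZMod (p^r)), (dstar S).Finite := fun S => Set.toFinite _
    set d : Set (ZMod (p^r)) → Finset (ZMod (p^r)) := fun S => (hd S).toFinset with hdd
    have hdc : ∀ S, ∀ x, x ∈ d S ↔ x ∈ dstar S := fun S x => (hd S).mem_toFinset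
    have H1 : ∀ S ∈ 𝒞, p - 1 ≤ (d S).card := by
      intro S hS
      rw [← Set.ncard_coe_finset, (hd S).coe_toFinset]
      exact dstar_ncard_ge p r hp hodd hr S (hw S ((h𝒞c S).mp hS))
    have H2 : ∀ S ∈ 𝒞, ∀ T ∈ 𝒞, S ≠ T → Disjoint (d S) (d T) := by
      intro S hS T hT hST
      have := hdisj S ((h𝒞c S).mp hS) T ((h𝒞c T).mp hT) hST
      rw [Finset.disjoint_left]
      intro x hx hx'
      exact Set.disjoint_left.mp this ((hdc S x).mp hx) ((hdc T x).mp hx')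
    have H3 : (𝒞.biUnion d) ⊆ Finset.univ.erase (0 : ZMod (p^r)) := by
      intro x hx
      rw [Finset.mem_biUnion] at hx
      obtain ⟨S, _, hxS⟩ := hx
      rw [Finset.mem_erase]
      exact ⟨((hdc S x).mp hxS).2, Finset.mem_univ x⟩
    have H4 : 𝒞.card * (p - 1) ≤ p^r - 1 :=
      calc 𝒞.card * (p - 1) = 𝒞.card • (p - 1) := (smul_eq_mul _ _).symm
      _ ≤ ∑ S ∈ 𝒞, (d S).card := Finset.card_nsmul_le_sum 𝒞 _ _ H1
      _ = (𝒞.biUnion d).card := (Finset.card_biUnion H2).symm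
      _ ≤ (Finset.univ.erase (0 : ZMod (p^r))).card := Finset.card_le_card H3
      _ = p^r - 1 := by rw [Finset.card_erase_of_mem (Finset.mem_univ _),
            Finset.card_univ, ZMod.card]
    have hCn : C.ncard = 𝒞.card := by rw [← Set.ncard_coe_finset, hCfin.coe_toFinset]
    rw [hCn, Nat.le_div_iff_mul_le (by omega : 0 < p - 1)]
    exact H4
end

section
/- Let p ≡ 5 (mod 8) be a prime with 10^{(p−1)/4} ≡ 1 (mod p). Then each of the three sets {1, −1, 2, −2}, {1, −2, 4, −5}, and {−1, 2, −4, 5} forms a system of distinct representatives of the four cosets of the index-4 subgroup H^4(p) of Z_p^× (the subgroup of fourth powers). -/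
/-- The subgroup `H^e(p)` of `e`-th powers in `(ZMod p)ˣ`, as a set. -/
def He (p e : ℕ) : Set (ZMod p) := {x | ∃ y : ZMod p, y ≠ 0 ∧ y ^ e = x}

/-- A system of distinct representatives of the `e` cosets of `H^e(p)` in
`(ZMod p)ˣ`: a set of `e` nonzero elements lying in pairwise distinct cosets. -/
def IsSDR (p e : ℕ) (T : Set (ZMod p)) : Prop :=
  T.ncard = e ∧ (∀ a ∈ T, a ≠ 0) ∧
  ∀ a ∈ T, ∀ b ∈ T, a ≠ b → a * b⁻¹ ∉ He p e

lemma sdr_helper (p q : ℕ) [Fact p.Prime] (hq : 4 * q = p - 1)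
    (a b c d : ZMod p) (ha : a ≠ 0) (hb : b ≠ 0) (hc : c ≠ 0) (hd : d ≠ 0)
    (hab : a ^ q ≠ b ^ q) (hac : a ^ q ≠ c ^ q) (had : a ^ q ≠ d ^ q)
    (hbc : b ^ q ≠ c ^ q) (hbd : b ^ q ≠ d ^ q) (hcd : c ^ q ≠ d ^ q) :
    IsSDR p 4 ({a, b, c, d} : Set (ZMod p)) := by
  have hab' : a ≠ b := fun h => hab (by rw [h])
  have hac' : a ≠ c := fun h => hac (by rw [h])
  have had' : a ≠ d := fun h => had (by rw [h])
  have hbc' : b ≠ c := fun h => hbc (by rw [h])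
  have hbd' : b ≠ d := fun h => hbd (by rw [h])
  have hcd' : c ≠ d := fun h => hcd (by rw [h])
  have main : ∀ x y : ZMod p, y ≠ 0 → x ^ q ≠ y ^ q → x * y⁻¹ ∉ He p 4 := by
    rintro x y hy hne ⟨z, hz0, hz⟩
    apply hne
    have hx : x = z ^ 4 * y := by
      field_simp at hz
      exact hz.symm
    calc x ^ q = (z ^ 4) ^ q * y ^ q := by rw [hx, mul_pow]
      _ = z ^ (p - 1) * y ^ q := by rw [← pow_mul, hq]
      _ = y ^ q := by rw [ZMod.pow_card_sub_one_eq_one hz0, one_mul]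
  refine ⟨?_, ?_, ?_⟩
  · rw [Set.ncard_insert_of_notMem (by simp [hab', hac', had']),
      Set.ncard_insert_of_notMem (by simp [hbc', hbd']),
      Set.ncard_insert_of_notMem (by simp [hcd']), Set.ncard_singleton]
  · intro x hx
    simp only [Set.mem_insert_iff, Set.mem_singleton_iff] at hx
    rcases hx with rfl | rfl | rfl | rfl <;> assumption
  · intro x hx y hy hxy
    simp only [Set.mem_insert_iff, Set.mem_singleton_iff] at hx hy
    rcases hx with rfl | rfl | rfl | rfl <;> rcases hy with rfl | rfl | rfl | rfl <;>
      first
      | exact (hxy rfl).elim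
      | exact main _ _ (by assumption) (by first
          | exact hab | exact hac | exact had | exact hbc | exact hbd | exact hcd
          | exact hab.symm | exact hac.symm | exact had.symm | exact hbc.symm
          | exact hbd.symm | exact hcd.symm)

theorem stmt19 (p : ℕ) (hp : p.Prime) (hp8 : p % 8 = 5)
    (h10 : (10 : ZMod p) ^ ((p - 1) / 4) = 1) :
    IsSDR p 4 ({1, -1, 2, -2} : Set (ZMod p)) ∧
    IsSDR p 4 ({1, -2, 4, -5} : Set (ZMod p)) ∧
    IsSDR p 4 ({-1, 2, -4, 5} : Set (ZMod p)) := by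
  haveI : Fact p.Prime := ⟨hp⟩
  have hp5 : p ≠ 5 := by
    rintro rfl
    revert h10
    decide
  have hp13 : 13 ≤ p := by
    rcases hp.eq_one_or_self_of_dvd 1 ⟨p, (one_mul p).symm⟩ with h | h <;> omega
  set q : ℕ := (p - 1) / 4 with hqdef
  have hq4 : 4 * q = p - 1 := by omega
  have hqodd : Odd q := ⟨(p - 5) / 8, by omega⟩
  have hnz : ∀ n : ℕ, 0 < n → n < p → ((n : ℕ) : ZMod p) ≠ 0 := by
    intro n h1 h2 h
    rw [ZMod.natCast_eq_zero_iff] at h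
    have := Nat.le_of_dvd h1 h
    omega
  have h2ne : (2 : ZMod p) ≠ 0 := by exact_mod_cast hnz 2 (by norm_num) (by omega)
  have h3ne : (3 : ZMod p) ≠ 0 := by exact_mod_cast hnz 3 (by norm_num) (by omega)
  have h5ne : (5 : ZMod p) ≠ 0 := by exact_mod_cast hnz 5 (by norm_num) (by omega)
  have h4ne : (4 : ZMod p) ≠ 0 := by exact_mod_cast hnz 4 (by norm_num) (by omega)
  have h1ne : (1 : ZMod p) ≠ 0 := one_ne_zero
  have h1m1 : (1 : ZMod p) ≠ -1 := by
    intro h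
    exact h2ne (by linear_combination h)
  set i : ZMod p := (2 : ZMod p) ^ q with hidef
  -- i ^ 2 = -1
  have hns : ¬ IsSquare (2 : ZMod p) := by
    rw [ZMod.exists_sq_eq_two_iff (by omega)]
    omega
  have hisq : i ^ 2 = -1 := by
    have h1 : (2 : ZMod p) ^ (p / 2) = -1 := by
      rcases ZMod.pow_div_two_eq_neg_one_or_one p h2ne with h | h
      · exact absurd ((ZMod.euler_criterion p h2ne).mpr h) hns
      · exact h
    calc i ^ 2 = (2 : ZMod p) ^ (q * 2) := by rw [hidef, pow_mul]
      _ = (2 : ZMod p) ^ (p / 2) := by congr 1; omega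
      _ = -1 := h1
  have hi0 : i ≠ 0 := by
    intro h
    have : ((-1 : ZMod p)) = 0 := by rw [← hisq, h]; ring
    exact h1ne (by linear_combination -this)
  -- the four values 1, -1, i, -i are pairwise distinct
  have v1 : (1 : ZMod p) ≠ i := by
    intro h
    exact h1m1 (by linear_combination (1 + i) * h + hisq)
  have v2 : (1 : ZMod p) ≠ -i := by
    intro h
    exact h1m1 (by linear_combination (1 - i) * h + hisq)
  have v3 : (-1 : ZMod p) ≠ i := by
    intro h
    exact h1m1 (by linear_combination (i - 1) * h + hisq)
  have v4 : (-1 : ZMod p) ≠ -i := by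
    intro h
    exact h1m1 (by linear_combination -(1 + i) * h + hisq)
  have v5 : i ≠ -i := by
    intro h
    exact hi0 (by
      have h2 : (2 : ZMod p) * i = 0 := by linear_combination h
      rcases mul_eq_zero.mp h2 with h' | h'
      · exact absurd h' h2ne
      · exact h')
  -- power values
  have p1 : (1 : ZMod p) ^ q = 1 := one_pow q
  have pm1 : (-1 : ZMod p) ^ q = -1 := hqodd.neg_one_pow
  have p2 : (2 : ZMod p) ^ q = i := hidef.symm
  have pm2 : (-2 : ZMod p) ^ q = -i := by
    have : (-2 : ZMod p) = (-1) * 2 := by ring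
    rw [this, mul_pow, pm1, p2]; ring
  have p4 : (4 : ZMod p) ^ q = -1 := by
    rw [show (4 : ZMod p) = 2 ^ 2 by norm_num, pow_right_comm, p2, hisq]
  have pm4 : (-4 : ZMod p) ^ q = 1 := by
    have : (-4 : ZMod p) = (-1) * 4 := by ring
    rw [this, mul_pow, pm1, p4]; ring
  have p5 : (5 : ZMod p) ^ q = -i := by
    have h25 : i * (5 : ZMod p) ^ q = 1 := by
      rw [hidef, ← mul_pow]
      have : (2 : ZMod p) * 5 = 10 := by norm_num
      rw [this, h10]
    have h25' : i * (-i) = 1 := by linear_combination -hisq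
    exact mul_left_cancel₀ hi0 (by rw [h25, h25'])
  have pm5 : (-5 : ZMod p) ^ q = i := by
    have : (-5 : ZMod p) = (-1) * 5 := by ring
    rw [this, mul_pow, pm1, p5]; ring
  refine ⟨?_, ?_, ?_⟩
  · -- {1, -1, 2, -2}: values 1, -1, i, -i
    refine sdr_helper p q hq4 1 (-1) 2 (-2) h1ne (neg_ne_zero.mpr h1ne) h2ne
      (neg_ne_zero.mpr h2ne) ?_ ?_ ?_ ?_ ?_ ?_ <;>
      simp only [p1, pm1, p2, pm2] <;>
      first
        | exact h1m1 | exact v1 | exact v2 | exact v3 | exact v4 | exact v5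
        | exact h1m1.symm | exact v1.symm | exact v2.symm | exact v3.symm
        | exact v4.symm | exact v5.symm
  · -- {1, -2, 4, -5}: values 1, -i, -1, i
    refine sdr_helper p q hq4 1 (-2) 4 (-5) h1ne (neg_ne_zero.mpr h2ne) h4ne
      (neg_ne_zero.mpr h5ne) ?_ ?_ ?_ ?_ ?_ ?_ <;>
      simp only [p1, pm2, p4, pm5] <;>
      first
        | exact h1m1 | exact v1 | exact v2 | exact v3 | exact v4 | exact v5
        | exact h1m1.symm | exact v1.symm | exact v2.symm | exact v3.symm
        | exact v4.symm | exact v5.symm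
  · -- {-1, 2, -4, 5}: values -1, i, 1, -i
    refine sdr_helper p q hq4 (-1) 2 (-4) 5 (neg_ne_zero.mpr h1ne) h2ne
      (neg_ne_zero.mpr h4ne) h5ne ?_ ?_ ?_ ?_ ?_ ?_ <;>
      simp only [pm1, p2, pm4, p5] <;>
      first
        | exact h1m1 | exact v1 | exact v2 | exact v3 | exact v4 | exact v5
        | exact h1m1.symm | exact v1.symm | exact v2.symm | exact v3.symm
        | exact v4.symm | exact v5.symm
end
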